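/- For every polynomial p ∈ ℝ[x]: p ∈ Z_Φ if and only if (𝓛⁽ʲ⁾(p))(v₀) = 0 for every integer j ≥ 0. -/

import Mathlib

/-!
Along a solution, the derivative of `t ↦ p(x(t))` is `t ↦ (𝓛 p)(x(t))`, so the `j`-th derivative
of `t ↦ p(x(t))` at `0` is `(𝓛⁽ʲ⁾ p)(v₀)`. The function `t ↦ p(x(t))` is analytic on the interval
`D`, so it vanishes on `D` iff all its derivatives vanish at `0`, by the identity theorem.
-/

open MvPolynomial

noncomputable def lieDeriv {N : ℕ} (F : Fin N → MvPolynomial (Fin N) ℝ)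
    (p : MvPolynomial (Fin N) ℝ) : MvPolynomial (Fin N) ℝ :=
  ∑ i, pderiv i p * F i

def Zset {N : ℕ} (x : ℝ → Fin N → ℝ) (D : Set ℝ) : Set (MvPolynomial (Fin N) ℝ) :=
  {p | ∀ t ∈ D, eval (x t) p = 0}

theorem AnalyticOnNhd.eqOn_zero_iff_iteratedDeriv_eq_zero {𝕜 E : Type*}
    [NontriviallyNormedField 𝕜] [CharZero 𝕜] [NormedAddCommGroup E] [NormedSpace 𝕜 E]
    [CompleteSpace E] {f : 𝕜 → E} {U : Set 𝕜} {z : 𝕜} (hf : AnalyticOnNhd 𝕜 f U)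
    (hUo : IsOpen U) (hUc : IsPreconnected U) (hz : z ∈ U) :
    Set.EqOn f 0 U ↔ ∀ n, iteratedDeriv n f z = 0 := by
  refine ⟨fun h n => ?_, fun h => ?_⟩
  · have hf0 : f =ᶠ[nhds z] 0 := Filter.eventuallyEq_of_mem (hUo.mem_nhds hz) h
    simpa using hf0.iteratedDeriv_eq n
  · have htop : analyticOrderAt f z = ⊤ :=
      ENat.eq_top_iff_forall_ge.2 fun n =>
        (natCast_le_analyticOrderAt_iff_iteratedDeriv_eq_zero (hf z hz)).2 fun i _ => h i
    exact hf.eqOn_zero_of_preconnected_of_eventuallyEq_zero hUc hz (analyticOrderAt_eq_top.1 htop)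

theorem AnalyticOnNhd.mvPolynomial_eval {σ 𝕜 E : Type*} [NontriviallyNormedField 𝕜]
    [NormedAddCommGroup E] [NormedSpace 𝕜 E] {x : E → σ → 𝕜} {U : Set E}
    (hx : ∀ i, AnalyticOnNhd 𝕜 (fun t => x t i) U) (p : MvPolynomial σ 𝕜) :
    AnalyticOnNhd 𝕜 (fun t => eval (x t) p) U := by
  induction p using MvPolynomial.induction_on with
  | C a => simpa using analyticOnNhd_const
  | add p q hp hq =>
    simp only [map_add]
    exact fun t ht => (hp t ht).fun_add (hq t ht)
  | mul_X p i hp =>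
    simp only [map_mul, eval_X]
    exact fun t ht => (hp t ht).fun_mul (hx i t ht)

section LieDerivative

variable {N : ℕ} (F : Fin N → MvPolynomial (Fin N) ℝ)

theorem lieDeriv_C (a : ℝ) : lieDeriv F (C a) = 0 := by
  simp [lieDeriv]

theorem lieDeriv_add (p q : MvPolynomial (Fin N) ℝ) :
    lieDeriv F (p + q) = lieDeriv F p + lieDeriv F q := by
  simp [lieDeriv, add_mul, Finset.sum_add_distrib]

theorem lieDeriv_mul_X (p : MvPolynomial (Fin N) ℝ) (i : Fin N) :
    lieDeriv F (p * X i) = lieDeriv F p * X i + p * F i := by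
  simp [lieDeriv, pderiv_X, Pi.single_apply, add_mul, Finset.sum_add_distrib, Finset.sum_mul,
    mul_right_comm _ (X i), mul_comm (X i), add_comm]

variable {F} {x : ℝ → Fin N → ℝ}

theorem hasDerivAt_eval_lieDeriv {t : ℝ} (hx : HasDerivAt x (fun i => eval (x t) (F i)) t)
    (p : MvPolynomial (Fin N) ℝ) :
    HasDerivAt (fun s => eval (x s) p) (eval (x t) (lieDeriv F p)) t := by
  induction p using MvPolynomial.induction_on with
  | C a => simpa [lieDeriv_C] using hasDerivAt_const t a
  | add p q hp hq => simpa [lieDeriv_add] using hp.fun_add hq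
  | mul_X p i hp => simpa [lieDeriv_mul_X] using hp.fun_mul (hasDerivAt_pi.1 hx i)

theorem eqOn_iteratedDeriv_eval_iterate_lieDeriv {D : Set ℝ} (hD : IsOpen D)
    (hx : ∀ t ∈ D, HasDerivAt x (fun i => eval (x t) (F i)) t) (p : MvPolynomial (Fin N) ℝ)
    (j : ℕ) :
    Set.EqOn (iteratedDeriv j fun t => eval (x t) p)
      (fun t => eval (x t) ((lieDeriv F)^[j] p)) D := by
  induction j with
  | zero => intro t _; simp
  | succ j ih =>
    intro t ht
    rw [iteratedDeriv_succ, Function.iterate_succ_apply',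
      (Filter.eventuallyEq_of_mem (hD.mem_nhds ht) ih).deriv_eq]
    exact (hasDerivAt_eval_lieDeriv (hx t ht) _).deriv

end LieDerivative

theorem stmt5_general
    (N : ℕ)
    (F : Fin N → MvPolynomial (Fin N) ℝ) (v₀ : Fin N → ℝ)
    (D : Set ℝ) (hD : IsOpen D) (hDc : D.OrdConnected) (h0 : (0 : ℝ) ∈ D)
    (x : ℝ → Fin N → ℝ)
    (hsol : ∀ t ∈ D, HasDerivAt x (fun i => eval (x t) (F i)) t)
    (hx0 : x 0 = v₀)
    (han : ∀ i, AnalyticOnNhd ℝ (fun t => x t i) D)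
    (p : MvPolynomial (Fin N) ℝ) :
    p ∈ Zset x D ↔ ∀ j : ℕ, eval v₀ ((lieDeriv F)^[j] p) = 0 := by
  have hderiv (j : ℕ) :
      iteratedDeriv j (fun t => eval (x t) p) 0 = eval v₀ ((lieDeriv F)^[j] p) := by
    simpa [hx0] using eqOn_iteratedDeriv_eval_iterate_lieDeriv hD hsol p j h0
  simp only [← hderiv]
  exact (AnalyticOnNhd.mvPolynomial_eval han p).eqOn_zero_iff_iteratedDeriv_eq_zero hD
    hDc.isPreconnected h0

/-- `p ∈ Z_Φ` iff `(𝓛⁽ʲ⁾ p)(v₀) = 0` for every `j ≥ 0`. -/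
theorem stmt5
    (N : ℕ) (hN : 1 ≤ N)
    (F : Fin N → MvPolynomial (Fin N) ℝ) (v₀ : Fin N → ℝ)
    (D : Set ℝ) (hD : IsOpen D) (hDc : D.OrdConnected) (h0 : (0 : ℝ) ∈ D)
    (x : ℝ → Fin N → ℝ)
    (hsol : ∀ t ∈ D, HasDerivAt x (fun i => eval (x t) (F i)) t)
    (hx0 : x 0 = v₀)
    (han : ∀ i, AnalyticOnNhd ℝ (fun t => x t i) D)
    (p : MvPolynomial (Fin N) ℝ) :
    p ∈ Zset x D ↔ ∀ j : ℕ, eval v₀ ((lieDeriv F)^[j] p) = 0 :=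
  stmt5_general N F v₀ D hD hDc h0 x hsol hx0 han p
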